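/- For real numbers r₁, r₂, r₃ and positive reals s₁, s₂, s₃, the quantity A(r,s) = 4s₁s₂s₃(s₁+s₂+s₃) + s₁²(r₂-r₃)² + s₂²(r₁-r₃)² + s₃²(r₁-r₂)² + 2s₁s₃(r₂-r₃)(r₂-r₁) + 2s₂s₃(r₁-r₃)(r₁-r₂) + 2s₁s₂(r₃-r₁)(r₃-r₂) is strictly positive. -/
import Mathlib


/-- The discriminant-type quantity `A(r,s)` is strictly positive for
`r₁, r₂, r₃ ∈ ℝ` and `s₁, s₂, s₃ > 0`. -/
theorem stmt10 (r₁ r₂ r₃ s₁ s₂ s₃ : ℝ) (h₁ : 0 < s₁) (h₂ : 0 < s₂) (h₃ : 0 < s₃) :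
    0 < 4*s₁*s₂*s₃*(s₁+s₂+s₃) + s₁^2*(r₂-r₃)^2 + s₂^2*(r₁-r₃)^2 + s₃^2*(r₁-r₂)^2
        + 2*s₁*s₃*(r₂-r₃)*(r₂-r₁) + 2*s₂*s₃*(r₁-r₃)*(r₁-r₂) + 2*s₁*s₂*(r₃-r₁)*(r₃-r₂) := by
  have ha : (0:ℝ) < (s₂+s₃)^2 := by positivity
  have key : (s₂+s₃)^2 *
      (4*s₁*s₂*s₃*(s₁+s₂+s₃) + s₁^2*(r₂-r₃)^2 + s₂^2*(r₁-r₃)^2 + s₃^2*(r₁-r₂)^2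
        + 2*s₁*s₃*(r₂-r₃)*(r₂-r₁) + 2*s₂*s₃*(r₁-r₃)*(r₁-r₂) + 2*s₁*s₂*(r₃-r₁)*(r₃-r₂))
      = ((s₂+s₃)^2*(r₁-r₂) + ((s₁+s₂)*(s₂+s₃) - 2*s₁*s₃)*(r₂-r₃))^2
        + (4*s₁*s₂*s₃*(s₁+s₂+s₃)) * ((r₂-r₃)^2 + (s₂+s₃)^2) := by ring
  have hpos : 0 < (4*s₁*s₂*s₃*(s₁+s₂+s₃)) * ((r₂-r₃)^2 + (s₂+s₃)^2) := by positivity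
  have hsq := sq_nonneg ((s₂+s₃)^2*(r₁-r₂) + ((s₁+s₂)*(s₂+s₃) - 2*s₁*s₃)*(r₂-r₃))
  nlinarith [key, hpos, hsq, ha]
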